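/- If conjunctive query Q1 is bag-contained in conjunctive query Q2 (i.e., Q1(D,B) is a sub-multiset of Q2(D,B) for every bag-valued database D), then for each relation symbol p, the number of subgoals of Q2 with predicate p is at least the number of subgoals of Q1 with predicate p. -/

import Mathlib

/-- A relational schema: a type of relation symbols with arities. -/
structure Schema where
  Rel : Type
  ar : Rel → ℕ

/-- A relational atom over schema `S`; variables are natural numbers. -/
structure Atom (S : Schema) where
  rel : S.Rel
  args : Fin (S.ar rel) → ℕ

/-- A conjunctive query: a head (list of variables) and a body (list of atoms). -/
structure CQ (S : Schema) where
  hd : List ℕ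
  body : List (Atom S)

variable {S : Schema} {Dom : Type}

def Atom.rename (f : ℕ → ℕ) (a : Atom S) : Atom S := ⟨a.rel, f ∘ a.args⟩

def CQ.rename (f : ℕ → ℕ) (Q : CQ S) : CQ S := ⟨Q.hd.map f, Q.body.map (Atom.rename f)⟩

/-- The variables of a query. -/
def CQ.vars (Q : CQ S) : Set ℕ := {x | x ∈ Q.hd ∨ ∃ a ∈ Q.body, ∃ i, a.args i = x}

/-- A bag-valued database: a finite multiset of tuples for each relation symbol. -/
abbrev DB (S : Schema) (Dom : Type) := (r : S.Rel) → Multiset (Fin (S.ar r) → Dom)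

/-- A set-valued database: every relation is a set. -/
def IsSetDB (D : DB S Dom) : Prop := ∀ r, (D r).Nodup

/-- An assignment satisfies a list of atoms. -/
def Sat (D : DB S Dom) (body : List (Atom S)) (γ : ℕ → Dom) : Prop :=
  ∀ a ∈ body, (γ ∘ a.args) ∈ D a.rel

/-- Bag-semantics weight of an assignment: product of multiplicities of matched tuples. -/
noncomputable def weight (D : DB S Dom) (Q : CQ S) (γ : ℕ → Dom) : ℕ :=
  (Q.body.map fun (a : Atom S) =>
    letI : DecidableEq (Fin (S.ar a.rel) → Dom) := Classical.decEq _
    (D a.rel).count (γ ∘ a.args)).prod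

/-- Canonical assignments: everything outside the query's variables is a default value. -/
def Canon [Inhabited Dom] (Q : CQ S) (γ : ℕ → Dom) : Prop := ∀ x, x ∉ Q.vars → γ x = default

/-- Bag semantics: multiplicity of the tuple `t` in `Q(D, B)`. -/
noncomputable def bagMult [Inhabited Dom] (D : DB S Dom) (Q : CQ S) (t : List Dom) : ℕ :=
  ∑ᶠ γ ∈ {γ : ℕ → Dom | Canon Q γ ∧ Q.hd.map γ = t}, weight D Q γ

/-- Bag-set semantics: multiplicity of `t` in `Q(D, BS)`: one per satisfying assignment. -/
noncomputable def bsMult [Inhabited Dom] (D : DB S Dom) (Q : CQ S) (t : List Dom) : ℕ :=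
  Nat.card {γ : ℕ → Dom // Canon Q γ ∧ Sat D Q.body γ ∧ Q.hd.map γ = t}

/-- Set semantics: the set of tuples returned by `Q` on `D`. -/
def setAns (D : DB S Dom) (Q : CQ S) : Set (List Dom) :=
  {t | ∃ γ : ℕ → Dom, Sat D Q.body γ ∧ Q.hd.map γ = t}

/-- Query isomorphism: a bijective variable renaming preserving head and body (as multiset). -/
def CQIso (Q1 Q2 : CQ S) : Prop :=
  ∃ e : ℕ ≃ ℕ, Q1.hd.map ⇑e = Q2.hd ∧
    Multiset.map (Atom.rename ⇑e) (Q1.body : Multiset (Atom S)) = (Q2.body : Multiset (Atom S))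

/-!
Evaluate both queries on the database in which every relation consists of copies of the
all-`default` tuple: two copies for `p`, one for every other relation. A canonical assignment of
nonzero weight maps every variable to `default`, so the all-`default` answer tuple has
multiplicity `2 ^ (number of p-subgoals)`. With one copy everywhere, the same argument shows
that the heads of the two queries have equal length.
-/

theorem weight_ne_zero_iff (D : DB S Dom) (Q : CQ S) (γ : ℕ → Dom) :
    weight D Q γ ≠ 0 ↔ Sat D Q.body γ := by
  simp [weight, Sat, List.prod_eq_zero_iff, Multiset.count_eq_zero]

theorem bagMult_eq_zero_of_length_ne [Inhabited Dom] (D : DB S Dom) (Q : CQ S) {t : List Dom}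
    (ht : t.length ≠ Q.hd.length) : bagMult D Q t = 0 :=
  finsum_mem_eq_zero_of_forall_eq_zero fun _ hγ => (ht (by simp [← hγ.2])).elim

theorem List.prod_map_ite_eq_pow_countP {α M : Type*} [CommMonoid M] (l : List α) (p : α → Prop)
    [DecidablePred p] (x : M) :
    (l.map fun a => if p a then x else 1).prod = x ^ l.countP (fun a => decide (p a)) := by
  rw [List.prod_map_ite, List.countP_eq_length_filter]
  simp

noncomputable def constDB [Inhabited Dom] (m : S.Rel → ℕ) : DB S Dom :=
  fun r => Multiset.replicate (m r) fun _ => default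

section constDB
variable [Inhabited Dom] (m : S.Rel → ℕ) (Q : CQ S)

theorem weight_constDB_default :
    weight (constDB m) Q (fun _ => (default : Dom)) = (Q.body.map fun a => m a.rel).prod := by
  simp [weight, constDB, Function.comp_def]

theorem eq_default_of_sat_constDB {γ : ℕ → Dom} (hsat : Sat (constDB m) Q.body γ)
    {a : Atom S} (ha : a ∈ Q.body) (i : Fin (S.ar a.rel)) : γ (a.args i) = default :=
  congrFun (Multiset.eq_of_mem_replicate (hsat a ha)) i

theorem eq_default_of_canon_of_sat_constDB {γ : ℕ → Dom} (hcan : Canon Q γ)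
    (hhd : Q.hd.map γ = List.replicate Q.hd.length default) (hsat : Sat (constDB m) Q.body γ) :
    γ = fun _ => default := by
  funext x
  by_cases hx : x ∈ Q.vars
  · rcases hx with hx | ⟨a, ha, i, rfl⟩
    · exact List.eq_of_mem_replicate (hhd ▸ List.mem_map_of_mem hx)
    · exact eq_default_of_sat_constDB m Q hsat ha i
  · exact hcan x hx

theorem bagMult_constDB :
    bagMult (constDB m) Q (List.replicate Q.hd.length (default : Dom)) =
      (Q.body.map fun a => m a.rel).prod := by
  have hsupp : {γ : ℕ → Dom | Canon Q γ ∧ Q.hd.map γ = List.replicate Q.hd.length default} ∩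
      Function.support (weight (constDB m) Q) =
      ↑({fun _ => default} : Finset (ℕ → Dom)) ∩ Function.support (weight (constDB m) Q) := by
    ext γ
    simp only [Set.mem_inter_iff, Set.mem_ofPred_eq, Function.mem_support, weight_ne_zero_iff,
      Finset.coe_singleton, Set.mem_singleton_iff]
    constructor
    · rintro ⟨⟨hcan, hhd⟩, hsat⟩
      exact ⟨eq_default_of_canon_of_sat_constDB m Q hcan hhd hsat, hsat⟩
    · rintro ⟨rfl, hsat⟩
      exact ⟨⟨fun _ _ => rfl, by simp⟩, hsat⟩
  rw [bagMult, finsum_mem_eq_sum_of_inter_support_eq _ hsupp, Finset.sum_singleton,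
    weight_constDB_default]

end constDB

theorem bag_containment_implies_subgoal_counts {S : Schema} [DecidableEq S.Rel]
    (Dom : Type) [Inhabited Dom] (Q1 Q2 : CQ S)
    (hcont : ∀ (D : DB S Dom) (t : List Dom), bagMult D Q1 t ≤ bagMult D Q2 t) :
    ∀ p : S.Rel,
      Q1.body.countP (fun a => decide (a.rel = p)) ≤
        Q2.body.countP (fun a => decide (a.rel = p)) := by
  intro p
  have hlen : Q2.hd.length = Q1.hd.length := by
    by_contra hne
    have h := hcont (constDB fun _ => 1) (List.replicate Q1.hd.length default)
    rw [bagMult_constDB, bagMult_eq_zero_of_length_ne _ _ (by simpa using Ne.symm hne)] at h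
    simp at h
  have h := hcont (constDB fun r => if r = p then 2 else 1) (List.replicate Q1.hd.length default)
  rw [bagMult_constDB, ← hlen, bagMult_constDB, List.prod_map_ite_eq_pow_countP,
    List.prod_map_ite_eq_pow_countP] at h
  exact (Nat.pow_le_pow_iff_right one_lt_two).mp h
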